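/- Let c=(c_0,c_1,c_2,...) be a sequence of rationals and define α_m = c_{2m}+c_{2m+1} and β_m = c_{2m+1}·c_{2m+2} for all m≥0. Then for every n≥1, Dyck_n(c) = c_0 · Mot_{n-1}(α,β). -/

import Mathlib

/-- A step of a Motzkin path: up `(1,1)`, down `(1,-1)`, or horizontal `(1,0)`. -/
inductive MStep : Type
  | up : MStep
  | down : MStep
  | flat : MStep
  deriving DecidableEq

instance instFintypeMStep : Fintype MStep :=
  ⟨{MStep.up, MStep.down, MStep.flat}, fun x => by cases x <;> simp⟩

/-- The vertical displacement of a Motzkin step. -/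
def MStep.val : MStep → ℤ
  | .up => 1
  | .down => -1
  | .flat => 0

/-- The height of the path after its first `k` steps. -/
def mHeight (l : List MStep) (k : ℕ) : ℤ := ((l.take k).map MStep.val).sum

/-- A list of steps is a Motzkin path if it never goes below the x-axis and ends at height 0. -/
def IsMotzkin (l : List MStep) : Prop :=
  (∀ k : ℕ, 0 ≤ mHeight l k) ∧ mHeight l l.length = 0

/-- The weight of a Motzkin path w.r.t. `(b, lam)`: a factor `b i` for every horizontal step
of height `i` and a factor `lam i` for every down step of height `i` (the height of a step
being the `y`-coordinate of its ending point). -/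
def mWeight (b lam : ℕ → ℚ) (l : List MStep) : ℚ :=
  ∏ i ∈ Finset.range l.length,
    match l.getD i MStep.up with
    | .up => 1
    | .flat => b (mHeight l (i + 1)).toNat
    | .down => lam (mHeight l (i + 1)).toNat

open Classical in
/-- `Mot_n(b,lam)`: the sum of the weights of all Motzkin paths of length `n`. -/
noncomputable def motSum (n : ℕ) (b lam : ℕ → ℚ) : ℚ :=
  ∑ f : Fin n → MStep,
    if IsMotzkin (List.ofFn f) then mWeight b lam (List.ofFn f) else 0

/-- A step of a Dyck path: up `(1,1)` or down `(1,-1)`. -/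
inductive DStep : Type
  | up : DStep
  | down : DStep
  deriving DecidableEq

instance instFintypeDStep : Fintype DStep :=
  ⟨{DStep.up, DStep.down}, fun x => by cases x <;> simp⟩

/-- The vertical displacement of a Dyck step. -/
def DStep.val : DStep → ℤ
  | .up => 1
  | .down => -1

/-- The height of the path after its first `k` steps. -/
def dHeight (l : List DStep) (k : ℕ) : ℤ := ((l.take k).map DStep.val).sum

/-- A list of steps is a Dyck path if it never goes below the x-axis and ends at height 0. -/
def IsDyck (l : List DStep) : Prop :=
  (∀ k : ℕ, 0 ≤ dHeight l k) ∧ dHeight l l.length = 0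

/-- The weight of a Dyck path w.r.t. `c`: a factor `c i` for every down step of height `i`
(the height of a step being the `y`-coordinate of its ending point). -/
def dWeight (c : ℕ → ℚ) (l : List DStep) : ℚ :=
  ∏ i ∈ Finset.range l.length,
    match l.getD i DStep.up with
    | .up => 1
    | .down => c (dHeight l (i + 1)).toNat

open Classical in
/-- `Dyck_n(c)`: the sum of the weights of all Dyck paths of length `2n`. -/
noncomputable def dyckSum (n : ℕ) (c : ℕ → ℚ) : ℚ :=
  ∑ f : Fin (2 * n) → DStep,
    if IsDyck (List.ofFn f) then dWeight c (List.ofFn f) else 0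

/-!
Both sums are computed by a transfer-matrix recursion on the starting height: the weighted
count `D h n` of nonnegative Dyck walks of length `n` from height `h` to `0` satisfies
`D (h+1) (n+1) = D (h+2) n + c h * D h n`. Taking two steps at a time from an odd height
`2h+1` leads to `2h+3`, back to `2h+1` (through `2h+2` or `2h`, with total weight `α h`), or
to `2h-1` (weight `β (h-1)`), which is the Motzkin recursion. Hence
`D (2h+1) (2n+1) = c 0 * M h n`, the factor `c 0` being the final step from height `1` to `0`,
and a Dyck path of length `2n+2` is an up step followed by such a walk from height `1`.
-/

section Walk

variable {S : Type*} (v : S → ℤ) (w : S → ℕ → ℚ)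

def walkHeight (l : List S) (k : ℕ) : ℤ := ((l.take k).map v).sum

/-- A step `s` ending at height `j` contributes `w s j`; the weight vanishes unless the walk
stays at height `≥ 0` and ends at `0`. -/
def walkWeightFrom : ℤ → List S → ℚ
  | h, [] => if h = 0 then 1 else 0
  | h, s :: t => if 0 ≤ h + v s then w s (h + v s).toNat * walkWeightFrom (h + v s) t else 0

theorem walkHeight_cons_succ (s : S) (t : List S) (k : ℕ) :
    walkHeight v (s :: t) (k + 1) = v s + walkHeight v t k := by
  simp [walkHeight]

open Classical in
theorem walkWeightFrom_eq (d : S) (l : List S) (h : ℤ) (hh : 0 ≤ h) :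
    walkWeightFrom v w h l =
      if (∀ k, 0 ≤ h + walkHeight v l k) ∧ h + walkHeight v l l.length = 0 then
        ∏ i ∈ Finset.range l.length, w (l.getD i d) (h + walkHeight v l (i + 1)).toNat
      else 0 := by
  induction l generalizing h with
  | nil => simp [walkWeightFrom, walkHeight, hh]
  | cons s t ih =>
    have hcond : (∀ k, 0 ≤ h + walkHeight v (s :: t) k) ↔
        ∀ k, 0 ≤ h + v s + walkHeight v t k := by
      rw [← Nat.and_forall_add_one]
      simp only [walkHeight_cons_succ, ← add_assoc]
      simp [walkHeight, hh]
    by_cases hs : 0 ≤ h + v s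
    · simp only [walkWeightFrom, if_pos hs, ih _ hs, hcond, List.length_cons,
        walkHeight_cons_succ, ← add_assoc, Finset.prod_range_succ', List.getD_cons_succ,
        List.getD_cons_zero, mul_ite, mul_zero]
      simp [walkHeight, mul_comm]
    · have hfail : ¬ ∀ k, 0 ≤ h + v s + walkHeight v t k :=
        fun H => hs (by simpa [walkHeight] using H 0)
      simp [walkWeightFrom, hs, hcond, hfail]

variable [Fintype S]

/-- Weighted count of the walks of length `n` from height `h` down to `0`. -/
def walkSum (h : ℤ) (n : ℕ) : ℚ := ∑ f : Fin n → S, walkWeightFrom v w h (List.ofFn f)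

theorem walkSum_zero (h : ℤ) : walkSum v w h 0 = if h = 0 then 1 else 0 := by
  simp [walkSum, walkWeightFrom]

theorem walkSum_succ (h : ℤ) (n : ℕ) :
    walkSum v w h (n + 1) =
      ∑ s, if 0 ≤ h + v s then w s (h + v s).toNat * walkSum v w (h + v s) n else 0 := by
  rw [walkSum, ← (Fin.consEquiv fun _ => S).sum_comp, Fintype.sum_prod_type]
  refine Finset.sum_congr rfl fun s _ => ?_
  split_ifs with hs <;> simp [walkSum, walkWeightFrom, hs, List.ofFn_succ, Fin.consEquiv,
    Finset.mul_sum]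

end Walk

def dyckStepWeight (c : ℕ → ℚ) : DStep → ℕ → ℚ
  | .up, _ => 1
  | .down, j => c j

def motzkinStepWeight (b lam : ℕ → ℚ) : MStep → ℕ → ℚ
  | .up, _ => 1
  | .flat, j => b j
  | .down, j => lam j

noncomputable def dyckWalkSum (c : ℕ → ℚ) (h n : ℕ) : ℚ :=
  walkSum DStep.val (dyckStepWeight c) h n

noncomputable def motzkinWalkSum (b lam : ℕ → ℚ) (h n : ℕ) : ℚ :=
  walkSum MStep.val (motzkinStepWeight b lam) h n

open Classical in
theorem dyckSum_eq_dyckWalkSum (n : ℕ) (c : ℕ → ℚ) :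
    dyckSum n c = dyckWalkSum c 0 (2 * n) := by
  refine Finset.sum_congr rfl fun f _ => ?_
  rw [Nat.cast_zero, walkWeightFrom_eq _ _ .up _ _ le_rfl]
  refine if_congr (by simp [IsDyck, dHeight, walkHeight]) ?_ rfl
  refine Finset.prod_congr rfl fun i _ => ?_
  cases (List.ofFn f).getD i .up <;> simp [dyckStepWeight, dHeight, walkHeight]

open Classical in
theorem motSum_eq_motzkinWalkSum (n : ℕ) (b lam : ℕ → ℚ) :
    motSum n b lam = motzkinWalkSum b lam 0 n := by
  refine Finset.sum_congr rfl fun f _ => ?_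
  rw [Nat.cast_zero, walkWeightFrom_eq _ _ .up _ _ le_rfl]
  refine if_congr (by simp [IsMotzkin, mHeight, walkHeight]) ?_ rfl
  refine Finset.prod_congr rfl fun i _ => ?_
  cases (List.ofFn f).getD i .up <;> simp [motzkinStepWeight, mHeight, walkHeight]

section Recurrences

variable (c b lam : ℕ → ℚ) (h n : ℕ)

theorem dyckWalkSum_length_zero : dyckWalkSum c h 0 = if h = 0 then 1 else 0 := by
  simp [dyckWalkSum, walkSum_zero]

theorem dyckWalkSum_zero_succ : dyckWalkSum c 0 (n + 1) = dyckWalkSum c 1 n := by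
  rw [dyckWalkSum, walkSum_succ]
  simp [dyckWalkSum, DStep.val, dyckStepWeight, Finset.univ, Fintype.elems]

theorem dyckWalkSum_succ_succ :
    dyckWalkSum c (h + 1) (n + 1) = dyckWalkSum c (h + 2) n + c h * dyckWalkSum c h n := by
  rw [dyckWalkSum, walkSum_succ]
  have : (0 : ℤ) ≤ h + 2 := by positivity
  simp [dyckWalkSum, DStep.val, dyckStepWeight, Finset.univ, Fintype.elems, add_assoc, this]

theorem motzkinWalkSum_length_zero :
    motzkinWalkSum b lam h 0 = if h = 0 then 1 else 0 := by
  simp [motzkinWalkSum, walkSum_zero]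

theorem motzkinWalkSum_zero_succ :
    motzkinWalkSum b lam 0 (n + 1) =
      motzkinWalkSum b lam 1 n + b 0 * motzkinWalkSum b lam 0 n := by
  rw [motzkinWalkSum, walkSum_succ]
  simp [motzkinWalkSum, MStep.val, motzkinStepWeight, Finset.univ, Fintype.elems]

theorem motzkinWalkSum_succ_succ :
    motzkinWalkSum b lam (h + 1) (n + 1) = motzkinWalkSum b lam (h + 2) n +
      lam h * motzkinWalkSum b lam h n + b (h + 1) * motzkinWalkSum b lam (h + 1) n := by
  rw [motzkinWalkSum, walkSum_succ]
  have : (0 : ℤ) ≤ h + 2 := by positivity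
  have : (0 : ℤ) ≤ h + 1 := by positivity
  simp [motzkinWalkSum, MStep.val, motzkinStepWeight, Finset.univ, Fintype.elems, add_assoc, *]

end Recurrences

section Contraction

variable (c : ℕ → ℚ) (h n : ℕ)

theorem dyckWalkSum_one_add_two :
    dyckWalkSum c 1 (n + 2) = dyckWalkSum c 3 n + (c 0 + c 1) * dyckWalkSum c 1 n := by
  rw [dyckWalkSum_succ_succ c 0 (n + 1), dyckWalkSum_succ_succ c 1 n, dyckWalkSum_zero_succ]
  ring

theorem dyckWalkSum_odd_add_two :
    dyckWalkSum c (2 * (h + 1) + 1) (n + 2) = dyckWalkSum c (2 * (h + 2) + 1) n +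
      c (2 * h + 1) * c (2 * h + 2) * dyckWalkSum c (2 * h + 1) n +
      (c (2 * (h + 1)) + c (2 * (h + 1) + 1)) * dyckWalkSum c (2 * (h + 1) + 1) n := by
  rw [show 2 * (h + 1) = 2 * h + 2 by ring, show 2 * (h + 2) + 1 = 2 * h + 3 + 1 + 1 by ring,
    dyckWalkSum_succ_succ c (2 * h + 2) (n + 1), dyckWalkSum_succ_succ c (2 * h + 3) n,
    dyckWalkSum_succ_succ c (2 * h + 1) n]
  ring

theorem dyckWalkSum_odd_eq_motzkinWalkSum (α β : ℕ → ℚ)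
    (hα : ∀ m : ℕ, α m = c (2 * m) + c (2 * m + 1))
    (hβ : ∀ m : ℕ, β m = c (2 * m + 1) * c (2 * m + 2)) :
    dyckWalkSum c (2 * h + 1) (2 * n + 1) = c 0 * motzkinWalkSum α β h n := by
  induction n generalizing h with
  | zero =>
    rw [dyckWalkSum_succ_succ, dyckWalkSum_length_zero, dyckWalkSum_length_zero,
      motzkinWalkSum_length_zero]
    rcases h with _ | h <;> simp
  | succ n ih =>
    rw [show 2 * (n + 1) + 1 = 2 * n + 1 + 2 by ring]
    rcases h with _ | h
    · rw [dyckWalkSum_one_add_two, ih 1, ih 0, motzkinWalkSum_zero_succ, hα]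
      ring
    · rw [dyckWalkSum_odd_add_two, ih (h + 2), ih h, ih (h + 1), motzkinWalkSum_succ_succ,
        hα, hβ]
      ring

end Contraction

/-- If `α m = c (2m) + c (2m+1)` and `β m = c (2m+1) * c (2m+2)`, then
`Dyck_n(c) = c 0 * Mot_{n-1}(α, β)` for all `n ≥ 1`. -/
theorem dyck_eq_c0_mul_motzkin (c α β : ℕ → ℚ)
    (hα : ∀ m : ℕ, α m = c (2 * m) + c (2 * m + 1))
    (hβ : ∀ m : ℕ, β m = c (2 * m + 1) * c (2 * m + 2))
    (n : ℕ) (hn : 1 ≤ n) :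
    dyckSum n c = c 0 * motSum (n - 1) α β := by
  obtain ⟨m, rfl⟩ : ∃ m, n = m + 1 := ⟨n - 1, by omega⟩
  rw [dyckSum_eq_dyckWalkSum, show 2 * (m + 1) = 2 * m + 1 + 1 by ring, dyckWalkSum_zero_succ,
    Nat.add_sub_cancel, motSum_eq_motzkinWalkSum,
    ← dyckWalkSum_odd_eq_motzkinWalkSum c 0 m α β hα hβ]
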